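/- arXiv:2412.06283 — 5 statements merged into one kernel-verified Lean document; each statement's English description precedes it below -/
import Mathlib

section
/- Let G = (U, V, E) be a bipartite directed graph with arcs from U to V and from V to U, let s ∈ U be a vertex, and let A ⊆ V. Suppose u₁, u₂ ∈ U and v₁, v₂ ∈ V are such that (u₁,v₁) ∈ E and (u₂,v₂) ∈ E, but e = (u₁,v₂) ∉ E and e' = (u₂,v₁) ∉ E. Define haspath(G, s, A) ∈ {0,1} to be 1 iff there is a directed path in G from s to some vertex of A. Then haspath(G, s, A) + haspath(G + e + e', s, A) = haspath(G + e, s, A) + haspath(G + e', s, A). -/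
/-- One step along an arc of a bipartite directed graph with parts `U` and `V`,
arcs `E1 ⊆ U × V` and `E2 ⊆ V × U`. -/
def BipStep {U V : Type*} (E1 : Set (U × V)) (E2 : Set (V × U)) :
    (U ⊕ V) → (U ⊕ V) → Prop
  | Sum.inl u, Sum.inr v => (u, v) ∈ E1
  | Sum.inr v, Sum.inl u => (v, u) ∈ E2
  | _, _ => False

open Classical in
/-- `haspath` equals 1 if some vertex of `A` is reachable from `s`, and 0 otherwise. -/
noncomputable def haspath {U V : Type*} (E1 : Set (U × V)) (E2 : Set (V × U))
    (s : U) (A : Set V) : ℤ :=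
  if ∃ v ∈ A, Relation.ReflTransGen (BipStep E1 E2) (Sum.inl s) (Sum.inr v) then 1 else 0

/-!
Write `R(F)` for "`s` reaches `A` using the `U → V` arcs `F`". Reachability is monotone
in `F`, so it suffices to show `R(E) ↔ R(E + e) ∧ R(E + e')` and
`R(E + e + e') ↔ R(E + e) ∨ R(E + e')`: the identity is then `[p ∧ q] + [p ∨ q] = [p] + [q]`.
Both follow by cutting a path at the first and at the last new arc it uses: it goes from `s`
to some `uᵢ` and from some `vⱼ` to `A` inside `E`, and the arc `(uᵢ, vⱼ)` closing the gap lies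
in `E + e`, `E + e'`, or already in `E` when `i = j`.
-/

open Relation

section Reachability

variable {U V : Type*} {E1 F : Set (U × V)} {E2 : Set (V × U)}

theorem BipStep.mono (h : E1 ⊆ F) {x y : U ⊕ V} (hs : BipStep E1 E2 x y) :
    BipStep F E2 x y := by
  cases x <;> cases y <;> simp only [BipStep] at hs ⊢
  · exact h hs
  · exact hs

theorem reflTransGen_bipStep_mono (h : E1 ⊆ F) {x y : U ⊕ V}
    (hr : ReflTransGen (BipStep E1 E2) x y) : ReflTransGen (BipStep F E2) x y :=
  ReflTransGen.mono (fun _ _ => BipStep.mono h) _ _ hr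

theorem reflTransGen_bipStep_union {N : Set (U × V)} {x y : U ⊕ V}
    (h : ReflTransGen (BipStep (E1 ∪ N) E2) x y) :
    ReflTransGen (BipStep E1 E2) x y ∨
      ∃ p ∈ N, ∃ q ∈ N, ReflTransGen (BipStep E1 E2) x (.inl p.1) ∧
        ReflTransGen (BipStep E1 E2) (.inr q.2) y := by
  induction h using ReflTransGen.head_induction_on with
  | refl => exact .inl .refl
  | @head x z step _ ih =>
    by_cases hxz : BipStep E1 E2 x z
    · rcases ih with hzy | ⟨p, hp, q, hq, hzp, hqy⟩
      · exact .inl (.head hxz hzy)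
      · exact .inr ⟨p, hp, q, hq, .head hxz hzp, hqy⟩
    match x, z, step, hxz with
    | .inl u, .inr v, .inl hE, hxz => exact absurd hE hxz
    | .inl u, .inr v, .inr hN, _ =>
      refine .inr ?_
      rcases ih with hvy | ⟨_, _, q, hq, _, hqy⟩
      · exact ⟨(u, v), hN, (u, v), hN, .refl, hvy⟩
      · exact ⟨(u, v), hN, q, hq, .refl, hqy⟩
    | .inr v, .inl u, hE, hxz => exact absurd hE hxz

end Reachability

section Reaches

variable {U V : Type*} {E1 F : Set (U × V)} {E2 : Set (V × U)} {s : U} {A : Set V}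

def Reaches (E1 : Set (U × V)) (E2 : Set (V × U)) (s : U) (A : Set V) : Prop :=
  ∃ v ∈ A, ReflTransGen (BipStep E1 E2) (.inl s) (.inr v)

open Classical in
theorem haspath_eq_ite : haspath E1 E2 s A = if Reaches E1 E2 s A then 1 else 0 := rfl

theorem Reaches.mono (h : E1 ⊆ F) (hr : Reaches E1 E2 s A) : Reaches F E2 s A :=
  let ⟨v, hv, hsv⟩ := hr
  ⟨v, hv, reflTransGen_bipStep_mono h hsv⟩

theorem reaches_of_reflTransGen_of_mem {a : U} {b : V} {v : V} (hF : E1 ⊆ F) (hab : (a, b) ∈ F)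
    (hsa : ReflTransGen (BipStep E1 E2) (.inl s) (.inl a))
    (hbv : ReflTransGen (BipStep E1 E2) (.inr b) (.inr v)) (hv : v ∈ A) :
    Reaches F E2 s A :=
  have hab : BipStep F E2 (.inl a) (.inr b) := hab
  ⟨v, hv,
    ((reflTransGen_bipStep_mono hF hsa).tail hab).trans (reflTransGen_bipStep_mono hF hbv)⟩

theorem reaches_insert {a : U} {b : V} (hr : Reaches (insert (a, b) E1) E2 s A) :
    Reaches E1 E2 s A ∨ ReflTransGen (BipStep E1 E2) (.inl s) (.inl a) ∧
      ∃ v ∈ A, ReflTransGen (BipStep E1 E2) (.inr b) (.inr v) := by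
  obtain ⟨v, hv, hsv⟩ := hr
  rw [← Set.union_singleton] at hsv
  rcases reflTransGen_bipStep_union hsv with hsv | ⟨_, rfl, _, rfl, hsa, hbv⟩
  · exact .inl ⟨v, hv, hsv⟩
  · exact .inr ⟨hsa, v, hv, hbv⟩

variable {u₁ u₂ : U} {v₁ v₂ : V}

theorem reaches_iff_reaches_insert_and (h22 : (u₂, v₂) ∈ E1) :
    Reaches E1 E2 s A ↔
      Reaches (insert (u₁, v₂) E1) E2 s A ∧ Reaches (insert (u₂, v₁) E1) E2 s A := by
  refine ⟨fun hr => ⟨hr.mono (Set.subset_insert _ _), hr.mono (Set.subset_insert _ _)⟩, ?_⟩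
  rintro ⟨hr, hr'⟩
  rcases reaches_insert hr with hr | ⟨-, v, hv, hv₂v⟩
  · exact hr
  rcases reaches_insert hr' with hr' | ⟨hsu₂, -⟩
  · exact hr'
  exact reaches_of_reflTransGen_of_mem subset_rfl h22 hsu₂ hv₂v hv

theorem reaches_union_pair_iff_reaches_insert_or (h11 : (u₁, v₁) ∈ E1)
    (h22 : (u₂, v₂) ∈ E1) :
    Reaches (E1 ∪ {(u₁, v₂), (u₂, v₁)}) E2 s A ↔
      Reaches (insert (u₁, v₂) E1) E2 s A ∨ Reaches (insert (u₂, v₁) E1) E2 s A := by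
  have hE : E1 ⊆ insert (u₁, v₂) E1 := Set.subset_insert _ _
  have hE' : E1 ⊆ insert (u₂, v₁) E1 := Set.subset_insert _ _
  refine ⟨fun ⟨v, hv, hsv⟩ => ?_, fun hr => ?_⟩
  · rcases reflTransGen_bipStep_union hsv with hsv | ⟨p, hp, q, hq, hsp, hqv⟩
    · exact .inl ⟨v, hv, reflTransGen_bipStep_mono hE hsv⟩
    simp only [Set.mem_insert_iff, Set.mem_singleton_iff] at hp hq
    rcases hp with rfl | rfl <;> rcases hq with rfl | rfl
    · exact .inl (reaches_of_reflTransGen_of_mem hE (Set.mem_insert _ _) hsp hqv hv)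
    · exact .inl (reaches_of_reflTransGen_of_mem hE (hE h11) hsp hqv hv)
    · exact .inl (reaches_of_reflTransGen_of_mem hE (hE h22) hsp hqv hv)
    · exact .inr (reaches_of_reflTransGen_of_mem hE' (Set.mem_insert _ _) hsp hqv hv)
  · refine hr.elim (Reaches.mono ?_) (Reaches.mono ?_) <;> intro p hp <;>
      simp only [Set.mem_union, Set.mem_insert_iff, Set.mem_singleton_iff] at hp ⊢ <;> tauto

end Reaches

theorem ite_and_add_ite_or {R : Type*} [AddCommMonoidWithOne R] (p q : Prop)
    [Decidable p] [Decidable q] :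
    ((if p ∧ q then 1 else 0) + if p ∨ q then 1 else 0 : R) =
      (if p then 1 else 0) + if q then 1 else 0 := by
  by_cases p <;> by_cases q <;> simp [*]

theorem haspath_add_eq_general {U V : Type*} (E1 : Set (U × V)) (E2 : Set (V × U))
    (s : U) (A : Set V) (u₁ u₂ : U) (v₁ v₂ : V)
    (h11 : (u₁, v₁) ∈ E1) (h22 : (u₂, v₂) ∈ E1) :
    haspath E1 E2 s A + haspath (E1 ∪ {(u₁, v₂), (u₂, v₁)}) E2 s A =
      haspath (insert (u₁, v₂) E1) E2 s A + haspath (insert (u₂, v₁) E1) E2 s A := by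
  classical
  simp only [haspath_eq_ite, reaches_union_pair_iff_reaches_insert_or h11 h22,
    reaches_iff_reaches_insert_and (u₁ := u₁) (v₁ := v₁) h22]
  exact ite_and_add_ite_or _ _

theorem haspath_add_eq {U V : Type*} (E1 : Set (U × V)) (E2 : Set (V × U))
    (s : U) (A : Set V) (u₁ u₂ : U) (v₁ v₂ : V)
    (h11 : (u₁, v₁) ∈ E1) (h22 : (u₂, v₂) ∈ E1)
    (h12 : (u₁, v₂) ∉ E1) (h21 : (u₂, v₁) ∉ E1) :
    haspath E1 E2 s A + haspath (E1 ∪ {(u₁, v₂), (u₂, v₁)}) E2 s A =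
      haspath (insert (u₁, v₂) E1) E2 s A + haspath (insert (u₂, v₁) E1) E2 s A :=
  haspath_add_eq_general E1 E2 s A u₁ u₂ v₁ v₂ h11 h22
end

section
/- Let f : [n] → P([n]) be a function such that its image, when the values are listed without repetition and together with [n], forms a strictly increasing chain S₀ ⊊ S₁ ⊊ ⋯ ⊊ S_k = [n] of k+1 distinct sets (so the rank of f is k, the number of distinct values of f other than [n]). Let M(f) be the n×n 0-1 matrix with M(f)_{i,j} = 1 iff j ∈ f(i), and let J be the all-ones n×n matrix. Then the rank (over the rationals) of the matrix J − M(f) equals k. -/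
/-!
The rows of `J - M(f)` are the indicator vectors of the complements `(f i)ᶜ`, so they span the
same space as the indicators of `S₀ᶜ, …, S_{k-1}ᶜ` (the complement of `S_k = [n]` contributes
the zero row). These `k` vectors are linearly independent: choosing `x_j ∈ S_{j+1} \ S_j`, the
matrix of their values at the points `x_j` is upper unitriangular.
-/

open Set

theorem linearIndependent_of_eval_triangular {ι α R : Type*} [CommRing R] [IsDomain R]
    [Fintype ι] [LinearOrder ι] {v : ι → α → R} (x : ι → α)
    (hlower : ∀ i j, j < i → v i (x j) = 0) (hdiag : ∀ i, v i (x i) ≠ 0) : LinearIndependent R v := by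
  classical
  set B : Matrix ι ι R := .of fun i j => v i (x j)
  have hB : B.BlockTriangular id := hlower
  have hdet : B.det ≠ 0 := by
    rw [Matrix.det_of_isUpperTriangular hB]
    exact Finset.prod_ne_zero_iff.mpr fun i _ => hdiag i
  exact (Matrix.linearIndependent_rows_of_det_ne_zero hdet).of_comp (LinearMap.funLeft R R x)

theorem linearIndependent_indicator_compl_of_strictMono {α R : Type*} [CommRing R] [IsDomain R]
    {k : ℕ} {S : Fin (k + 1) → Set α} (hS : StrictMono S) :
    LinearIndependent R fun j : Fin k => (S j.castSucc)ᶜ.indicator (1 : α → R) := by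
  have hnew (j : Fin k) : ∃ x, x ∈ S j.succ ∧ x ∉ S j.castSucc :=
    exists_of_ssubset (hS Fin.castSucc_lt_succ)
  choose x hx_succ hx_castSucc using hnew
  refine linearIndependent_of_eval_triangular x (fun i j hji => ?_) (fun i => ?_)
  · have : x j ∈ S i.castSucc := hS.monotone (Fin.succ_le_castSucc_iff.mpr hji) (hx_succ j)
    simp [this]
  · simp [hx_castSucc i]

theorem Fin.range_eq_insert_last {α : Type*} {k : ℕ} (S : Fin (k + 1) → α) :
    range S = insert (S (Fin.last k)) (range fun j : Fin k => S j.castSucc) := by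
  ext s
  constructor
  · rintro ⟨i, rfl⟩
    induction i using Fin.lastCases with
    | last => exact mem_insert _ _
    | cast j => exact mem_insert_of_mem _ ⟨j, rfl⟩
  · rintro (rfl | ⟨j, rfl⟩) <;> exact mem_range_self _

theorem span_indicator_compl_eq {ι α R : Type*} [Semiring R] {k : ℕ} (f : ι → Set α)
    (S : Fin (k + 1) → Set α) (hlast : S (Fin.last k) = univ)
    (hrange : range f ∪ {univ} = range S) :
    Submodule.span R (range fun i => (f i)ᶜ.indicator (1 : α → R)) =
      Submodule.span R (range fun j : Fin k => (S j.castSucc)ᶜ.indicator (1 : α → R)) := by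
  have key := congrArg (image fun s : Set α => sᶜ.indicator (1 : α → R)) hrange
  rw [image_union, image_singleton, Fin.range_eq_insert_last, image_insert_eq, hlast, compl_univ,
    indicator_empty, union_singleton, ← range_comp, ← range_comp] at key
  simp only [Function.comp_def, ← Pi.zero_def] at key
  simpa only [Submodule.span_insert_zero] using congrArg (Submodule.span R) key

open Classical in
theorem rank_J_sub_M {n k : ℕ} (f : Fin n → Set (Fin n))
    (S : Fin (k + 1) → Set (Fin n)) (hmono : StrictMono S)
    (hlast : S (Fin.last k) = Set.univ)
    (hrange : Set.range f ∪ {Set.univ} = Set.range S) :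
    (Matrix.of fun i j : Fin n => if j ∈ f i then (0 : ℚ) else 1).rank = k := by
  have hrows : (Matrix.of fun i j : Fin n => if j ∈ f i then (0 : ℚ) else 1).row =
      fun i => (f i)ᶜ.indicator 1 := by
    ext i j
    simp [indicator_apply, ite_not]
  rw [Matrix.rank_eq_finrank_span_row, hrows, span_indicator_compl_eq f S hlast hrange,
    finrank_span_eq_card (linearIndependent_indicator_compl_of_strictMono hmono), Fintype.card_fin]
end

section
/- Let f and f₀ be two ordered prefix tables on [n] with f ≠ f₀ and |f| ≥ |f₀|, where |f| = Σ_{u=1}^{n} |f(u)|. Then there exist u, v ∈ [n] and a layer index i with 0 ≤ i < rank(f₀) such that the prefix layer of u in f₀ is at most i, the suffix layer of v in f₀ is strictly greater than i, and v ∈ f(u). -/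
theorem divergence_breakthrough {n k : ℕ} (f f₀ : Fin n → Finset (Fin n))
    -- f and f₀ are ordered prefix tables
    (hfne : ∀ u, (f u).Nonempty) (hford : ∀ i j, f i ⊆ f j ∨ f j ⊆ f i)
    (hfstart : ∃ i, ∀ j, f i ⊆ f j)
    (hf₀ne : ∀ u, (f₀ u).Nonempty) (hf₀ord : ∀ i j, f₀ i ⊆ f₀ j ∨ f₀ j ⊆ f₀ i)
    (hf₀start : ∃ i, ∀ j, f₀ i ⊆ f₀ j)
    -- the layer chain of f₀: its distinct values together with [n], and k = rank f₀
    (S : Fin (k + 1) → Finset (Fin n)) (hmono : StrictMono S)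
    (hlast : S (Fin.last k) = Finset.univ)
    (hrange : Set.range f₀ ∪ {Finset.univ} = Set.range S)
    -- f differs from f₀ and has at least as many arcs
    (hne : f ≠ f₀) (hsize : ∑ u, (f₀ u).card ≤ ∑ u, (f u).card) :
    -- f breaks through some layer i < rank f₀ of f₀:
    -- there are u, v with prefix layer of u at most i, suffix layer of v greater
    -- than i (equivalently f₀ u ⊆ S i and v ∉ S i), and v ∈ f u
    ∃ (u v : Fin n) (i : Fin (k + 1)), (i : ℕ) < k ∧
      f₀ u ⊆ S i ∧ v ∉ S i ∧ v ∈ f u := by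
  by_contra hcon
  push_neg at hcon
  have hsub : ∀ u, f u ⊆ f₀ u := by
    intro u
    obtain ⟨j, hj⟩ : f₀ u ∈ Set.range S := by
      rw [← hrange]; exact Or.inl ⟨u, rfl⟩
    by_cases hjk : (j : ℕ) < k
    · intro v hv
      rw [← hj]
      by_contra hvS
      exact (hcon u v j hjk (le_of_eq hj.symm) hvS) hv
    · have hj' : j = Fin.last k := by
        apply Fin.ext
        have := j.isLt
        simp only [Fin.val_last]
        omega
      intro v hv
      rw [← hj, hj', hlast]
      exact Finset.mem_univ v
  obtain ⟨u₀, hu₀⟩ : ∃ u, f u ≠ f₀ u := by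
    by_contra h; push_neg at h; exact hne (funext h)
  have hlt : (f u₀).card < (f₀ u₀).card :=
    Finset.card_lt_card (lt_of_le_of_ne (hsub u₀) hu₀)
  have : ∑ u, (f u).card < ∑ u, (f₀ u).card :=
    Finset.sum_lt_sum (fun u _ => Finset.card_le_card (hsub u))
      ⟨u₀, Finset.mem_univ u₀, hlt⟩
  omega
end

section
/- For n ≥ 1, there is a bijection between ordered prefix tables on [n] of rank k and pairs (p, S) where p : [n] → {0,…,k} is a function whose image contains {0,…,k−1}, and S = (S₀ ⊊ S₁ ⊊ ⋯ ⊊ S_k = [n]) is a strictly increasing chain of nonempty subsets of [n]. The bijection maps (p, S) to the function f defined by f(u) = S_{p(u)}, and in particular the number of ordered prefix tables of rank k equals k!·S(n+1,k+1) · (k+1)!·S(n,k+1). -/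
/-- Stirling numbers of the second kind. -/
def stirling2 : ℕ → ℕ → ℕ
  | 0, 0 => 1
  | 0, _ + 1 => 0
  | _ + 1, 0 => 0
  | n + 1, k + 1 => (k + 1) * stirling2 n (k + 1) + stirling2 n k

/-- An ordered prefix table on `[n]`: all values nonempty, values totally ordered
by inclusion, and there is a starting state. -/
def IsOPT {n : ℕ} (f : Fin n → Finset (Fin n)) : Prop :=
  (∀ u, (f u).Nonempty) ∧ (∀ i j, f i ⊆ f j ∨ f j ⊆ f i) ∧ ∃ i, ∀ j, f i ⊆ f j

/-- The rank of an ordered prefix table: the number of distinct values `≠ [n]`. -/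
def rankOPT {n : ℕ} (f : Fin n → Finset (Fin n)) : ℕ :=
  ((Finset.univ.image f).erase Finset.univ).card

/-!
Adding `[n]` to the values of an ordered prefix table `f` of rank `k` gives a chain of `k + 1`
finsets; its increasing enumeration `S` factors `f` as `S ∘ p`, where `p` must hit every index
below `k`, and the factorisation is unique because a strictly monotone map is determined by its
range. For the count, a chain `S` is the sublevel filtration `S i = {v | g v ≤ i}` of a unique
surjection `g : [n] → {0,…,k}`, while the admissible `p` are the surjections onto `{0,…,k}` and
onto `{0,…,k-1}`. Surjections `Fin n → β` number `|β|! · S(n, |β|)` because splitting off the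
value at `0` gives the recursion `surj(n+1, m+1) = (m+1)(surj(n, m+1) + surj(n, m))`.
-/

open Function Set

section Surjections

variable {α β : Type*}

lemma insert_eq_univ_iff {a : β} {t : Set β} : insert a t = univ ↔ t = univ ∨ t = {a}ᶜ := by
  refine ⟨fun h => ?_, ?_⟩
  · by_cases ha : a ∈ t
    · exact .inl (insert_eq_of_mem ha ▸ h)
    · refine .inr (Subset.antisymm (fun x hx => ?_) fun x hx => ?_)
      · exact fun hxa => ha (hxa ▸ hx)
      · exact (h.symm ▸ mem_univ x : x ∈ insert a t).resolve_left hx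
  · rintro (rfl | rfl)
    exacts [insert_eq_of_mem (mem_univ a), eq_univ_of_forall fun x => em (x = a)]

def rangeEqEquivSurjective (s : Set β) :
    {h : α → β // range h = s} ≃ {h : α → s // Surjective h} where
  toFun h := ⟨codRestrict h.1 s (fun u => h.2.subset (mem_range_self u)),
    (surjective_codRestrict _).2 h.2⟩
  invFun g := ⟨Subtype.val ∘ g.1, by
    rw [range_comp, g.2.range_eq, image_univ, Subtype.range_coe]⟩
  left_inv _ := rfl
  right_inv _ := rfl

lemma card_insert_range_eq_univ [Finite α] [Finite β] (a : β) :
    Nat.card {h : α → β // insert a (range h) = univ} =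
      Nat.card {h : α → β // Surjective h} +
        Nat.card {h : α → ({a}ᶜ : Set β) // Surjective h} := by
  classical
  have hdisj : Disjoint (fun h : α → β => range h = univ) (fun h => range h = {a}ᶜ) :=
    fun _ hu hc h hh => compl_ne_univ.2 (singleton_nonempty a) ((hc h hh).symm.trans (hu h hh))
  rw [← Nat.card_congr (rangeEqEquivSurjective _),
    ← Nat.card_congr (Equiv.subtypeEquivRight fun h => range_eq_univ (f := h)), ← Nat.card_sum]
  exact Nat.card_congr ((Equiv.subtypeEquivRight fun h => insert_eq_univ_iff).trans
    (subtypeOrEquiv _ _ hdisj))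

lemma card_surjective_succ [Fintype β] (n : ℕ) :
    Nat.card {g : Fin (n + 1) → β // Surjective g} =
      ∑ a : β, Nat.card {h : Fin n → β // insert a (range h) = univ} := by
  rw [← Nat.card_sigma, ← Nat.card_congr (Equiv.subtypeProdEquivSigmaSubtype _)]
  refine Nat.card_congr (Equiv.subtypeEquiv (Fin.consEquiv fun _ => β).symm fun g => ?_)
  rw [← range_eq_univ, ← Fin.cons_self_tail g, Fin.range_cons]
  rfl

lemma card_compl_singleton [Finite β] (a : β) : Nat.card ({a}ᶜ : Set β) = Nat.card β - 1 := by
  rw [Nat.card_coe_set_eq, ncard_compl, ncard_singleton]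

theorem card_surjective_fin [Finite β] (n : ℕ) :
    Nat.card {g : Fin n → β // Surjective g} =
      (Nat.card β).factorial * stirling2 n (Nat.card β) := by
  induction n generalizing β with
  | zero =>
    rcases isEmpty_or_nonempty β with hβ | hβ
    · have : Unique {g : Fin 0 → β // Surjective g} :=
        ⟨⟨⟨Fin.elim0, isEmptyElim⟩⟩, fun g => Subtype.ext (funext fun u => u.elim0)⟩
      simp [stirling2]
    · have : IsEmpty {g : Fin 0 → β // Surjective g} :=
        ⟨fun g => Fin.elim0 (g.2 hβ.some).choose⟩
      obtain ⟨m, hm⟩ := Nat.exists_eq_add_one_of_ne_zero (Nat.card_pos (α := β)).ne'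
      simp [hm, stirling2]
  | succ n ih =>
    have := Fintype.ofFinite β
    simp only [card_surjective_succ, card_insert_range_eq_univ, ih, card_compl_singleton,
      Finset.sum_const, Finset.card_univ, ← Nat.card_eq_fintype_card, smul_eq_mul]
    rcases Nat.card β with _ | m
    · simp [stirling2]
    · simp only [stirling2, Nat.factorial_succ, add_tsub_cancel_right]
      ring

end Surjections

section Chains

variable {α : Type*} [Fintype α] {k : ℕ}

def IsFullChain (S : Fin (k + 1) → Finset α) : Prop :=
  StrictMono S ∧ S (Fin.last k) = Finset.univ ∧ (S 0).Nonempty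

def sublevelChain (g : α → Fin (k + 1)) (i : Fin (k + 1)) : Finset α := {v | g v ≤ i}

@[simp]
lemma mem_sublevelChain {g : α → Fin (k + 1)} {i : Fin (k + 1)} {v : α} :
    v ∈ sublevelChain g i ↔ g v ≤ i := by
  simp [sublevelChain]

lemma sublevelChain_injective : Injective (sublevelChain (α := α) (k := k)) := by
  intro g g' h
  funext v
  have h1 : v ∈ sublevelChain g' (g v) := h ▸ mem_sublevelChain.2 le_rfl
  have h2 : v ∈ sublevelChain g (g' v) := h ▸ mem_sublevelChain.2 le_rfl
  exact le_antisymm (mem_sublevelChain.1 h2) (mem_sublevelChain.1 h1)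

lemma isFullChain_sublevelChain_iff {g : α → Fin (k + 1)} :
    IsFullChain (sublevelChain g) ↔ Surjective g := by
  refine ⟨fun ⟨hS, _, h0⟩ i => ?_, fun hg => ⟨fun i j hij => ?_, ?_, ?_⟩⟩
  · induction i using Fin.cases with
    | zero =>
      obtain ⟨v, hv⟩ := h0
      exact ⟨v, nonpos_iff_eq_zero.1 (mem_sublevelChain.1 hv)⟩
    | succ j =>
      obtain ⟨v, hv, hv'⟩ := Finset.exists_of_ssubset (hS (Fin.castSucc_lt_succ (i := j)))
      simp only [mem_sublevelChain, not_le, Fin.castSucc_lt_iff_succ_le] at hv hv'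
      exact ⟨v, le_antisymm hv hv'⟩
  · refine Finset.ssubset_iff_of_subset (fun v hv => ?_) |>.2 ?_
    · simp only [mem_sublevelChain] at hv ⊢
      exact hv.trans hij.le
    · obtain ⟨v, rfl⟩ := hg j
      exact ⟨v, by simpa using hij⟩
  · ext v
    simp [Fin.le_last]
  · obtain ⟨v, hv⟩ := hg 0
    exact ⟨v, by simp [hv]⟩

lemma exists_sublevelChain_eq {S : Fin (k + 1) → Finset α} (hS : Monotone S)
    (hlast : S (Fin.last k) = Finset.univ) : ∃ g : α → Fin (k + 1), sublevelChain g = S := by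
  classical
  have hmem (v : α) : ∃ i, v ∈ S i := ⟨Fin.last k, hlast ▸ Finset.mem_univ v⟩
  refine ⟨fun v => Fin.find _ (hmem v), funext fun i => Finset.ext fun v => ?_⟩
  simp only [mem_sublevelChain, Fin.find_le_iff]
  exact ⟨fun ⟨j, hji, hv⟩ => hS hji hv, fun hv => ⟨i, le_rfl, hv⟩⟩

noncomputable def surjectiveEquivFullChain :
    {g : α → Fin (k + 1) // Surjective g} ≃ {S : Fin (k + 1) → Finset α // IsFullChain S} :=
  Equiv.ofBijective (fun g => ⟨sublevelChain g, isFullChain_sublevelChain_iff.2 g.2⟩) <| by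
    refine ⟨fun g g' h => Subtype.ext (sublevelChain_injective (congrArg Subtype.val h)), ?_⟩
    rintro ⟨S, hS⟩
    obtain ⟨g, rfl⟩ := exists_sublevelChain_eq hS.1.monotone hS.2.1
    exact ⟨⟨g, isFullChain_sublevelChain_iff.1 hS⟩, rfl⟩

end Chains

lemma IsChain.exists_strictMono_fin_range_eq {γ : Type*} [PartialOrder γ] {s : Finset γ}
    (hs : IsChain (· ≤ ·) (s : Set γ)) {m : ℕ} (hm : s.card = m) :
    ∃ S : Fin m → γ, StrictMono S ∧ range S = s := by
  classical
  let _ := hs.linearOrder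
  let e := Fintype.orderIsoFinOfCardEq (s : Set γ) (by simpa using hm)
  refine ⟨fun i => (e i).1, fun i j hij => e.strictMono hij, ?_⟩
  rw [range_comp' Subtype.val e, e.range_eq, image_univ, Subtype.range_coe]

section Factorization

variable {ι α : Type*} [Fintype α] {k : ℕ} {S : Fin (k + 1) → Finset α}
  {f : ι → Finset α}

lemma insert_univ_range_comp {p : ι → Fin (k + 1)} (hp : insert (Fin.last k) (range p) = univ)
    (hlast : S (Fin.last k) = Finset.univ) :
    insert Finset.univ (range fun u => S (p u)) = range S := by
  rw [← image_univ (f := S), ← hp, image_insert_eq, hlast, ← range_comp]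
  rfl

lemma eq_of_comp_eq {S' : Fin (k + 1) → Finset α} {p p' : ι → Fin (k + 1)}
    (hp : insert (Fin.last k) (range p) = univ) (hp' : insert (Fin.last k) (range p') = univ)
    (hS : IsFullChain S) (hS' : IsFullChain S')
    (h : (fun u => S (p u)) = fun u => S' (p' u)) : p = p' ∧ S = S' := by
  have hSS' : S = S' := (hS.1.range_inj hS'.1).1 <| by
    rw [← insert_univ_range_comp hp hS.2.1, ← insert_univ_range_comp hp' hS'.2.1, h]
  subst hSS'
  exact ⟨funext fun u => hS.1.injective (congrFun h u), rfl⟩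

lemma isFullChain_of_range_eq_insert_univ [Nonempty α] (hS : StrictMono S)
    (hrange : range S = insert Finset.univ (range f)) (hf : ∀ i, (f i).Nonempty) :
    IsFullChain S := by
  obtain ⟨j, hj⟩ : Finset.univ ∈ range S := hrange ▸ mem_insert _ _
  refine ⟨hS, (Finset.subset_univ _).antisymm (hj ▸ hS.monotone (Fin.le_last j)), ?_⟩
  obtain h0 | ⟨i, hi⟩ : S 0 ∈ insert Finset.univ (range f) := hrange ▸ mem_range_self 0
  · exact h0 ▸ Finset.univ_nonempty
  · exact hi ▸ hf i

lemma exists_comp_eq_of_range_eq_insert_univ (hS : StrictMono S)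
    (hlast : S (Fin.last k) = Finset.univ) (hrange : range S = insert Finset.univ (range f)) :
    ∃ p : ι → Fin (k + 1),
      insert (Fin.last k) (range p) = univ ∧ (fun u => S (p u)) = f := by
  have hf (u : ι) : f u ∈ range S := hrange ▸ mem_insert_of_mem _ (mem_range_self u)
  choose p hp using hf
  refine ⟨p, eq_univ_of_forall fun i => ?_, funext hp⟩
  by_cases hi : i = Fin.last k
  · exact .inl hi
  have hne : S i ≠ Finset.univ := hlast ▸ (hS (Fin.lt_last_iff_ne_last.2 hi)).ne
  obtain h | ⟨u, hu⟩ : S i ∈ insert Finset.univ (range f) := hrange ▸ mem_range_self i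
  · exact absurd h hne
  · exact .inr ⟨u, hS.injective (hp u ▸ hu)⟩

end Factorization

section OrderedPrefixTables

variable {n k : ℕ}

lemma isOPT_comp {p : Fin n → Fin (k + 1)} {S : Fin (k + 1) → Finset (Fin n)} (hS : Monotone S)
    (h0 : (S 0).Nonempty) : IsOPT fun u => S (p u) := by
  have : Nonempty (Fin n) := ⟨h0.choose⟩
  obtain ⟨u, hu⟩ := Finite.exists_min p
  exact ⟨fun u => h0.mono (hS (Fin.zero_le _)),
    fun i j => (le_total (p i) (p j)).imp (hS ·) (hS ·), u, fun j => hS (hu j)⟩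

lemma rankOPT_eq_card_insert_univ_sub_one (f : Fin n → Finset (Fin n)) :
    rankOPT f = (insert Finset.univ (Finset.univ.image f)).card - 1 := by
  rw [rankOPT, ← Finset.erase_insert_eq_erase,
    Finset.card_erase_of_mem (Finset.mem_insert_self _ _)]

lemma rankOPT_comp {p : Fin n → Fin (k + 1)} {S : Fin (k + 1) → Finset (Fin n)}
    (hp : insert (Fin.last k) (range p) = univ) (hS : IsFullChain S) :
    rankOPT (fun u => S (p u)) = k := by
  have h : insert Finset.univ (Finset.univ.image fun u => S (p u)) = Finset.univ.image S :=
    Finset.coe_injective (by simpa using insert_univ_range_comp hp hS.2.1)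
  rw [rankOPT_eq_card_insert_univ_sub_one, h, Finset.card_image_of_injective _ hS.1.injective]
  simp

lemma exists_comp_eq_of_isOPT {f : Fin n → Finset (Fin n)} (hf : IsOPT f)
    (hr : rankOPT f = k) :
    ∃ (p : Fin n → Fin (k + 1)) (S : Fin (k + 1) → Finset (Fin n)),
      insert (Fin.last k) (range p) = univ ∧ IsFullChain S ∧ (fun u => S (p u)) = f := by
  obtain ⟨hne, htotal, u, -⟩ := hf
  have : Nonempty (Fin n) := ⟨u⟩
  rw [rankOPT_eq_card_insert_univ_sub_one] at hr
  set A := insert Finset.univ (Finset.univ.image f)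
  have hchain : IsChain (· ≤ ·) (A : Set (Finset (Fin n))) := by
    simp only [A, Finset.coe_insert, Finset.coe_image, Finset.coe_univ, image_univ]
    refine IsChain.insert ?_ fun T _ _ => .inr (Finset.subset_univ T)
    rintro _ ⟨i, rfl⟩ _ ⟨j, rfl⟩ -
    exact htotal i j
  have hcard : A.card = k + 1 := by
    have : 0 < A.card := Finset.card_pos.2 ⟨_, Finset.mem_insert_self _ _⟩
    omega
  obtain ⟨S, hS, hSA⟩ := hchain.exists_strictMono_fin_range_eq hcard
  have hrange : range S = insert Finset.univ (range f) := by simpa [A] using hSA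
  have hfull := isFullChain_of_range_eq_insert_univ hS hrange hne
  obtain ⟨p, hp, hpS⟩ := exists_comp_eq_of_range_eq_insert_univ hS hfull.2.1 hrange
  exact ⟨p, S, hp, hfull, hpS⟩

noncomputable def optEquiv (n k : ℕ) :
    {pS : (Fin n → Fin (k + 1)) × (Fin (k + 1) → Finset (Fin n)) //
      insert (Fin.last k) (range pS.1) = univ ∧ IsFullChain pS.2} ≃
    {f : Fin n → Finset (Fin n) // IsOPT f ∧ rankOPT f = k} :=
  Equiv.ofBijective
    (fun x => ⟨fun u => x.1.2 (x.1.1 u), isOPT_comp x.2.2.1.monotone x.2.2.2.2,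
      rankOPT_comp x.2.1 x.2.2⟩) <| by
    refine ⟨fun x y h => ?_, fun f => ?_⟩
    · obtain ⟨hp, hS⟩ := eq_of_comp_eq x.2.1 y.2.1 x.2.2 y.2.2 (congrArg Subtype.val h)
      exact Subtype.ext (Prod.ext hp hS)
    · obtain ⟨p, S, hp, hS, hpS⟩ := exists_comp_eq_of_isOPT f.2.1 f.2.2
      exact ⟨⟨(p, S), hp, hS⟩, Subtype.ext hpS⟩

end OrderedPrefixTables

lemma insert_last_range_eq_univ_iff {ι : Type*} {k : ℕ} {p : ι → Fin (k + 1)} :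
    insert (Fin.last k) (range p) = univ ↔
      ∀ i : Fin (k + 1), (i : ℕ) < k → ∃ u, p u = i := by
  simp only [eq_univ_iff_forall, mem_insert_iff, mem_range]
  exact forall_congr' fun i =>
    or_iff_not_imp_left.trans (imp_congr_left Fin.lt_last_iff_ne_last.symm)

lemma card_insert_last_range_eq_univ (n k : ℕ) :
    Nat.card {p : Fin n → Fin (k + 1) // insert (Fin.last k) (range p) = univ} =
      k.factorial * stirling2 (n + 1) (k + 1) := by
  rw [card_insert_range_eq_univ, card_surjective_fin, card_surjective_fin, card_compl_singleton]
  simp only [Nat.card_eq_fintype_card, Fintype.card_fin, add_tsub_cancel_right, stirling2,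
    Nat.factorial_succ]
  ring

lemma card_isFullChain (n k : ℕ) :
    Nat.card {S : Fin (k + 1) → Finset (Fin n) // IsFullChain S} =
      (k + 1).factorial * stirling2 n (k + 1) := by
  rw [← Nat.card_congr surjectiveEquivFullChain, card_surjective_fin, Nat.card_eq_fintype_card,
    Fintype.card_fin]

theorem opt_bijection_and_count_general {n k : ℕ} :
    (∃ e : {pS : (Fin n → Fin (k + 1)) × (Fin (k + 1) → Finset (Fin n)) //
          (∀ i : Fin (k + 1), (i : ℕ) < k → ∃ u, pS.1 u = i) ∧
          StrictMono pS.2 ∧ pS.2 (Fin.last k) = Finset.univ ∧ (pS.2 0).Nonempty} ≃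
        {f : Fin n → Finset (Fin n) // IsOPT f ∧ rankOPT f = k},
      ∀ x, (e x).val = fun u => x.val.2 (x.val.1 u)) ∧
    Nat.card {f : Fin n → Finset (Fin n) // IsOPT f ∧ rankOPT f = k} =
      (Nat.factorial k * stirling2 (n + 1) (k + 1)) *
        (Nat.factorial (k + 1) * stirling2 n (k + 1)) := by
  refine ⟨⟨(Equiv.subtypeEquivRight fun _ =>
    and_congr_left' insert_last_range_eq_univ_iff).symm.trans (optEquiv n k), fun _ => rfl⟩, ?_⟩
  rw [← Nat.card_congr (optEquiv n k)]
  refine (Nat.card_congr (Equiv.subtypeProdEquivProd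
    (p := fun p : Fin n → Fin (k + 1) => insert (Fin.last k) (range p) = univ)
    (q := IsFullChain))).trans ?_
  rw [Nat.card_prod, card_insert_last_range_eq_univ, card_isFullChain]

theorem opt_bijection_and_count {n k : ℕ} (hn : 1 ≤ n) :
    (∃ e : {pS : (Fin n → Fin (k + 1)) × (Fin (k + 1) → Finset (Fin n)) //
          (∀ i : Fin (k + 1), (i : ℕ) < k → ∃ u, pS.1 u = i) ∧
          StrictMono pS.2 ∧ pS.2 (Fin.last k) = Finset.univ ∧ (pS.2 0).Nonempty} ≃
        {f : Fin n → Finset (Fin n) // IsOPT f ∧ rankOPT f = k},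
      ∀ x, (e x).val = fun u => x.val.2 (x.val.1 u)) ∧
    Nat.card {f : Fin n → Finset (Fin n) // IsOPT f ∧ rankOPT f = k} =
      (Nat.factorial k * stirling2 (n + 1) (k + 1)) *
        (Nat.factorial (k + 1) * stirling2 n (k + 1)) :=
  opt_bijection_and_count_general
end

section
/- There exists a constant c > 0 such that for all sufficiently large n, Σ_{k=1}^{n} (k−1)!·k!·S(n,k)·S(n+1,k) ≥ c · n^{2n+2} / e^{2n}, where S denotes Stirling numbers of the second kind. -/
open Nat Real

lemma stirling2_eq_zero_of_lt : ∀ {n k : ℕ}, n < k → stirling2 n k = 0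
  | 0, _ + 1, _ => rfl
  | n + 1, k + 1, h => by
    simp [stirling2, stirling2_eq_zero_of_lt (show n < k + 1 by omega),
      stirling2_eq_zero_of_lt (show n < k by omega)]

lemma stirling2_self : ∀ n : ℕ, stirling2 n n = 1
  | 0 => rfl
  | n + 1 => by simp [stirling2, stirling2_eq_zero_of_lt (lt_succ_self n), stirling2_self n]

lemma two_mul_stirling2_succ_self : ∀ n : ℕ, 2 * stirling2 (n + 1) n = n * (n + 1)
  | 0 => rfl
  | n + 1 => by
    have ih := two_mul_stirling2_succ_self n
    rw [stirling2, stirling2_self]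
    linarith

lemma two_mul_diagonal_term {n : ℕ} (hn : 0 < n) :
    2 * ((n - 1)! * n ! * stirling2 n n * stirling2 (n + 1) n) = n ! ^ 2 * (n + 1) := by
  have hfac : n * (n - 1)! = n ! := mul_factorial_pred hn.ne'
  calc 2 * ((n - 1)! * n ! * stirling2 n n * stirling2 (n + 1) n)
      = (n - 1)! * n ! * (2 * stirling2 (n + 1) n) := by rw [stirling2_self]; ring
    _ = (n * (n - 1)!) * n ! * (n + 1) := by rw [two_mul_stirling2_succ_self]; ring
    _ = n ! ^ 2 * (n + 1) := by rw [hfac]; ring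

lemma pow_two_mul_add_two_div_exp_le (n : ℕ) :
    (n : ℝ) ^ (2 * n + 2) / exp 1 ^ (2 * n) ≤ (n ! : ℝ) ^ 2 * (n + 1) / 2 := by
  have hstirling : 2 * π * n * ((n / exp 1) ^ n) ^ 2 ≤ (n ! : ℝ) ^ 2 := by
    have h := pow_le_pow_left₀ (by positivity) (Stirling.le_factorial_stirling n) 2
    rwa [mul_pow, sq_sqrt (by positivity)] at h
  have hlhs : (n : ℝ) ^ (2 * n + 2) / exp 1 ^ (2 * n) = n ^ 2 * ((n / exp 1) ^ n) ^ 2 := by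
    rw [div_pow, pow_add, pow_mul, pow_mul, ← pow_mul, ← pow_mul]
    ring
  have hpi : (1 : ℝ) ≤ π := by linarith [pi_gt_three]
  have hpow : (0 : ℝ) ≤ n * ((n / exp 1) ^ n) ^ 2 := by positivity
  rw [hlhs]
  nlinarith [mul_le_mul_of_nonneg_right hstirling (show (0 : ℝ) ≤ n + 1 by positivity),
    mul_le_mul_of_nonneg_right hpi (mul_nonneg hpow (show (0 : ℝ) ≤ n + 1 by positivity))]

theorem lower_bound_asymptotics :
    ∃ c : ℝ, 0 < c ∧ ∃ N : ℕ, ∀ n : ℕ, N ≤ n →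
      ((∑ k ∈ Finset.Icc 1 n,
          Nat.factorial (k - 1) * Nat.factorial k * stirling2 n k * stirling2 (n + 1) k : ℕ) : ℝ) ≥
        c * (n : ℝ) ^ (2 * n + 2) / Real.exp 1 ^ (2 * n) := by
  refine ⟨1, one_pos, 1, fun n hn => ?_⟩
  have hlast : (n - 1)! * n ! * stirling2 n n * stirling2 (n + 1) n ≤
      ∑ k ∈ Finset.Icc 1 n, (k - 1)! * k ! * stirling2 n k * stirling2 (n + 1) k :=
    Finset.single_le_sum (f := fun k => (k - 1)! * k ! * stirling2 n k * stirling2 (n + 1) k)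
      (fun _ _ => Nat.zero_le _) (Finset.mem_Icc.mpr ⟨hn, le_rfl⟩)
  have hlast_eq : ((n - 1)! * n ! * stirling2 n n * stirling2 (n + 1) n : ℝ) =
      (n ! : ℝ) ^ 2 * (n + 1) / 2 := by
    rw [eq_div_iff two_ne_zero, mul_comm]
    exact_mod_cast two_mul_diagonal_term hn
  calc 1 * (n : ℝ) ^ (2 * n + 2) / exp 1 ^ (2 * n)
      ≤ (n ! : ℝ) ^ 2 * (n + 1) / 2 := by rw [one_mul]; exact pow_two_mul_add_two_div_exp_le n
    _ = ((n - 1)! * n ! * stirling2 n n * stirling2 (n + 1) n : ℕ) := by push_cast; exact hlast_eq.symm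
    _ ≤ _ := by exact_mod_cast hlast
end
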